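/- arXiv:2506.20218 — 2 statements merged into one kernel-verified Lean document; each statement's English description precedes it below -/
import Mathlib

section
/- There exist a constant C6 with 0 < C6 < 1 and a natural number n0 such that for all integers n ≥ n0 with k ≤ n the following holds: if p_1 ≥ p_2 ≥ … ≥ p_k, h·p_1 ≥ 324·log n, and j ∈ {2,…,k} satisfies p_1 − p_j ≥ √(2·(p_1 + p_2)/h), then Pr(W_1) ≥ (1/(1 − C6)) · Pr(W_j). -/
open scoped BigOperators

noncomputable section

/-- The number of the `h` i.i.d. samples `ω` that are equal to opinion `i`. -/
def cnt {k h : ℕ} (ω : Fin h → Fin k) (i : Fin k) : ℕ :=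
  (Finset.univ.filter fun j => ω j = i).card

/-- The probability of the event `A` under `h` i.i.d. samples drawn from the
probability vector `p` on `Fin k` (multinomial sampling). -/
def multiPr (k h : ℕ) (p : Fin k → ℝ) (A : Set (Fin h → Fin k)) : ℝ :=
  ∑ ω : Fin h → Fin k, A.indicator (fun ω => ∏ j, p (ω j)) ω

/-- The maximal number of samples received by an opinion. -/
def maxCnt {k h : ℕ} (ω : Fin h → Fin k) : ℕ :=
  Finset.univ.sup (cnt ω)

/-- The number of opinions achieving the maximal number of samples. -/
def numMax {k h : ℕ} (ω : Fin h → Fin k) : ℕ :=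
  (Finset.univ.filter fun i => cnt ω i = maxCnt ω).card

/-- The probability that opinion `i` wins the `h`-majority with uniform
tie-breaking, jointly with the event `A`:
`E[ 1_A · 1{X_i = max_l X_l} / #{l : X_l maximal} ]`. -/
def winPrOn (k h : ℕ) (p : Fin k → ℝ) (A : Set (Fin h → Fin k)) (i : Fin k) : ℝ :=
  ∑ ω : Fin h → Fin k,
    (A ∩ {ω' | cnt ω' i = maxCnt ω'}).indicator
      (fun ω => (∏ j, p (ω j)) / (numMax ω : ℝ)) ω

/-- The probability that opinion `i` wins the `h`-majority with uniform tie-breaking. -/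
def winPr (k h : ℕ) (p : Fin k → ℝ) (i : Fin k) : ℝ :=
  winPrOn k h p Set.univ i

/-- `W_{i,strict}`: opinion `i` is the unique most sampled opinion. -/
def Wstrict (k h : ℕ) (i : Fin k) : Set (Fin h → Fin k) :=
  {ω | ∀ j, j ≠ i → cnt ω j < cnt ω i}

/-- `W_{i,ties}`: opinion `i` is among the most sampled opinions. -/
def Wties (k h : ℕ) (i : Fin k) : Set (Fin h → Fin k) :=
  {ω | ∀ j, j ≠ i → cnt ω j ≤ cnt ω i}

/-- `W_{1,2,strict}`: opinion `i₁` or opinion `i₂` is the unique most sampled opinion. -/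
def W12strict (k h : ℕ) (i₁ i₂ : Fin k) : Set (Fin h → Fin k) :=
  Wstrict k h i₁ ∪ Wstrict k h i₂

/-- Opinion 1 (as an element of `Fin k`, assuming `2 ≤ k`). -/
def o₁ (k : ℕ) (hk : 2 ≤ k) : Fin k := ⟨0, by omega⟩

/-- Opinion 2 (as an element of `Fin k`, assuming `2 ≤ k`). -/
def o₂ (k : ℕ) (hk : 2 ≤ k) : Fin k := ⟨1, by omega⟩

/-!
Relabelling `i = o₁` and `j` turns `Pr(W_j)` into the probability that `i` wins after `i` and `j`
exchange their probabilities `α = p_i ≥ β = p_j`. Condition on the votes of all other opinions,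
i.e. on the fibres of `collapse i j`, which recasts every vote for `j` as a vote for `i`: within a
fibre the number `v` of `j`-votes among the `m = X_i + X_j` merged votes is binomial, and the
tie-broken share of `i` is antitone in `v` and vanishes once `2v > m`. The likelihood ratio
`(α/β)^(2v - m)` of the exchanged to the original weight increases with `v`, so a Chebyshev-type
rearrangement bounds the exchanged winning mass of the fibre by the original one times the ratio
of the exchanged to the original weight of `{2v ≤ m}`, which is at most
`(2√(αβ))^m / ((α + β)^m / 2)` by a Chernoff bound and the symmetry `v ↦ m - v`. By the gap
condition this is `≤ 2e^{-4/5} < 1` once `m ≥ (4/5)h(α + β)`; the other fibres have probability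
at most `e^{-h(α + β)/50} ≤ 1/n²` by an exponential Chernoff bound, negligible next to
`Pr(W_1) ≥ 1/k ≥ 1/n`.
-/

open Finset

variable {k h : ℕ}

def winShare (c : Fin k → ℕ) (i : Fin k) : ℝ :=
  if c i = univ.sup c then 1 / #{l | c l = univ.sup c} else 0

section WinShare

variable {c : Fin k → ℕ} {i : Fin k}

lemma winShare_nonneg : 0 ≤ winShare c i := by
  unfold winShare; split_ifs <;> positivity

lemma winShare_le_one : winShare c i ≤ 1 := by
  unfold winShare
  split_ifs with hi
  · exact div_le_one_of_le₀ (Nat.one_le_cast.mpr (card_pos.mpr ⟨i, by simp [hi]⟩))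
      (Nat.cast_nonneg _)
  · exact zero_le_one

lemma winShare_eq_zero_of_lt {l : Fin k} (hl : c i < c l) : winShare c i = 0 :=
  if_neg fun hi => (hi ▸ le_sup (mem_univ l)).not_gt hl

lemma winShare_eq_one_of_forall_lt (hi : ∀ l ≠ i, c l < c i) : winShare c i = 1 := by
  have hsup : univ.sup c = c i :=
    le_antisymm (Finset.sup_le fun l _ => by
      rcases eq_or_ne l i with rfl | hl
      · rfl
      · exact (hi l hl).le) (le_sup (mem_univ i))
  have hfilter : ({l | c l = c i} : Finset (Fin k)) = {i} := by
    ext l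
    rcases eq_or_ne l i with rfl | hl
    · simp
    · simp [hl, (hi l hl).ne]
  simp [winShare, hsup, hfilter]

lemma sum_winShare (hk : 0 < k) (c : Fin k → ℕ) : ∑ i, winShare c i = 1 := by
  obtain ⟨i, -, hi⟩ := exists_mem_eq_sup univ (univ_nonempty_iff.mpr ⟨⟨0, hk⟩⟩) c
  have hpos : (0 : ℝ) < #{l | c l = univ.sup c} := by
    exact_mod_cast card_pos.mpr ⟨i, by simp [hi]⟩
  simp only [winShare, sum_ite, sum_const_zero, add_zero, sum_const, nsmul_eq_mul]
  field_simp

lemma winShare_comp_perm (σ : Equiv.Perm (Fin k)) : winShare (c ∘ σ) i = winShare c (σ i) := by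
  have hsup : univ.sup (c ∘ σ) = univ.sup c := by
    conv_rhs => rw [← map_univ_equiv σ]
    rw [sup_map]; rfl
  have hcard : #{l | c (σ l) = univ.sup c} = #{l | c l = univ.sup c} :=
    card_equiv σ (by simp)
  simp only [winShare, hsup, hcard, Function.comp_apply]

end WinShare

lemma pow_mul_pow_le_pow_mul_pow {R : Type*} [CommSemiring R] [PartialOrder R] [IsOrderedRing R]
    {α β : R} (hβ : 0 ≤ β) (hβα : β ≤ α) {a b a' b' : ℕ} (hsum : a + b = a' + b')
    (ha : a ≤ a') : α ^ a * β ^ b ≤ α ^ a' * β ^ b' := by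
  obtain ⟨d, rfl⟩ := Nat.exists_eq_add_of_le ha
  obtain rfl : b = b' + d := by omega
  have hα : 0 ≤ α := hβ.trans hβα
  calc α ^ a * β ^ (b' + d) = α ^ a * β ^ b' * β ^ d := by ring
    _ ≤ α ^ a * β ^ b' * α ^ d := by gcongr
    _ = α ^ (a + d) * β ^ b' := by ring

section Samples

variable {i j : Fin k}

lemma cnt_comp_perm (σ : Equiv.Perm (Fin k)) (ω : Fin h → Fin k) :
    cnt (σ ∘ ω) = cnt ω ∘ σ.symm := by
  funext l
  simp [cnt, ← Equiv.eq_symm_apply]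

lemma prod_eq_prod_pow_cnt (q : Fin k → ℝ) (ω : Fin h → Fin k) :
    ∏ t, q (ω t) = ∏ l, q l ^ cnt ω l := by
  rw [← prod_fiberwise' univ ω q]
  simp [cnt]

lemma prod_eq_pow_mul_pow_mul (hij : i ≠ j) (q : Fin k → ℝ) (ω : Fin h → Fin k) :
    ∏ t, q (ω t) = q i ^ cnt ω i * q j ^ cnt ω j * ∏ l ∈ {i, j}ᶜ, q l ^ cnt ω l := by
  rw [prod_eq_prod_pow_cnt, ← prod_mul_prod_compl {i, j}, prod_pair hij]

lemma prod_swap_eq (hij : i ≠ j) (p : Fin k → ℝ) (ω : Fin h → Fin k) :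
    ∏ t, p (Equiv.swap i j (ω t))
      = p j ^ cnt ω i * p i ^ cnt ω j * ∏ l ∈ {i, j}ᶜ, p l ^ cnt ω l := by
  have := prod_eq_pow_mul_pow_mul hij (p ∘ Equiv.swap i j) ω
  simp only [Function.comp_apply, Equiv.swap_apply_left, Equiv.swap_apply_right] at this
  rw [this]
  congr 1
  refine prod_congr rfl fun l hl => ?_
  simp only [mem_compl, mem_insert, mem_singleton, not_or] at hl
  rw [Equiv.swap_apply_of_ne_of_ne hl.1 hl.2]

lemma sum_prod_eq_pow (F : Fin k → ℝ) : ∑ ω : Fin h → Fin k, ∏ t, F (ω t) = (∑ l, F l) ^ h := by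
  rw [← Fintype.prod_sum (fun (_ : Fin h) l => F l), prod_const, card_univ, Fintype.card_fin]

end Samples

section WinPr

variable {p : Fin k → ℝ} {i j : Fin k}

lemma winPrOn_eq (p : Fin k → ℝ) (A : Set (Fin h → Fin k)) (i : Fin k) :
    winPrOn k h p A i = ∑ ω, A.indicator (fun ω => (∏ t, p (ω t)) * winShare (cnt ω) i) ω := by
  refine sum_congr rfl fun ω _ => ?_
  by_cases hA : ω ∈ A
  · rw [Set.indicator_of_mem hA, winShare]
    by_cases hi : cnt ω i = maxCnt ω
    · rw [Set.indicator_of_mem (show ω ∈ A ∩ {ω' | cnt ω' i = maxCnt ω'} from ⟨hA, hi⟩),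
        if_pos (show cnt ω i = univ.sup (cnt ω) from hi), mul_one_div]
      rfl
    · rw [Set.indicator_of_notMem fun hω => hi hω.2,
        if_neg (show ¬cnt ω i = univ.sup (cnt ω) from hi), mul_zero]
  · rw [Set.indicator_of_notMem hA, Set.indicator_of_notMem fun hω => hA hω.1]

lemma winPr_eq (p : Fin k → ℝ) (i : Fin k) :
    winPr k h p i = ∑ ω : Fin h → Fin k, (∏ t, p (ω t)) * winShare (cnt ω) i := by
  simp [winPr, winPrOn_eq]

lemma winPr_comp_perm (σ : Equiv.Perm (Fin k)) :
    winPr k h (p ∘ σ) i = winPr k h p (σ i) := by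
  rw [winPr_eq, winPr_eq]
  refine Fintype.sum_equiv (Equiv.arrowCongr (.refl _) σ) _ _ fun ω => ?_
  show _ = (∏ t, p (σ (ω t))) * winShare (cnt (σ ∘ ω)) (σ i)
  rw [cnt_comp_perm, winShare_comp_perm, Equiv.symm_apply_apply]
  rfl

lemma winPrOn_add_winPrOn_compl (A : Set (Fin h → Fin k)) :
    winPrOn k h p A i + winPrOn k h p Aᶜ i = winPr k h p i := by
  simp only [winPrOn_eq, winPr_eq, ← sum_add_distrib, Set.indicator_self_add_compl_apply]

lemma winPrOn_le_winPr (hp : ∀ l, 0 ≤ p l) (A : Set (Fin h → Fin k)) :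
    winPrOn k h p A i ≤ winPr k h p i := by
  rw [winPrOn_eq, winPr_eq]
  exact sum_le_sum fun ω _ => Set.indicator_le_self' (fun ω _ =>
    mul_nonneg (prod_nonneg fun t _ => hp _) winShare_nonneg) ω

lemma winPrOn_le_multiPr (hp : ∀ l, 0 ≤ p l) (A : Set (Fin h → Fin k)) :
    winPrOn k h p A i ≤ multiPr k h p A := by
  rw [winPrOn_eq]
  exact sum_le_sum fun ω _ => Set.indicator_le_indicator
    (mul_le_of_le_one_right (prod_nonneg fun t _ => hp _) winShare_le_one)

lemma sum_winPr (hk : 0 < k) (hps : ∑ l, p l = 1) : ∑ i, winPr k h p i = 1 := by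
  simp_rw [winPr_eq]
  rw [sum_comm]
  simp_rw [← mul_sum, sum_winShare hk, mul_one, sum_prod_eq_pow, hps, one_pow]

lemma winPr_le_winPr_of_le (hp : ∀ l, 0 ≤ p l) (hji : p j ≤ p i) :
    winPr k h p j ≤ winPr k h p i := by
  rcases eq_or_ne i j with rfl | hij
  · rfl
  rw [← Equiv.swap_apply_left i j, ← winPr_comp_perm, winPr_eq, winPr_eq]
  refine sum_le_sum fun ω _ => ?_
  rcases le_or_gt (cnt ω j) (cnt ω i) with hc | hc
  · refine mul_le_mul_of_nonneg_right ?_ winShare_nonneg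
    rw [Function.comp_def, prod_swap_eq hij, prod_eq_pow_mul_pow_mul hij]
    refine mul_le_mul_of_nonneg_right ?_ (prod_nonneg fun l _ => pow_nonneg (hp l) _)
    rw [mul_comm (p j ^ _)]
    exact pow_mul_pow_le_pow_mul_pow (hp j) hji (add_comm _ _) hc
  · simp [winShare_eq_zero_of_lt hc]

lemma one_le_card_mul_winPr (hk : 0 < k) (hp : ∀ l, 0 ≤ p l) (hps : ∑ l, p l = 1)
    (htop : ∀ l, p l ≤ p i) : 1 ≤ k * winPr k h p i := by
  calc (1 : ℝ) = ∑ l, winPr k h p l := (sum_winPr hk hps).symm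
    _ ≤ ∑ _l : Fin k, winPr k h p i := sum_le_sum fun l _ => winPr_le_winPr_of_le hp (htop l)
    _ = k * winPr k h p i := by simp

end WinPr

section Chernoff

variable {q : Fin k → ℝ} {i j : Fin k}

lemma sum_prod_mul_pow_cnt_add_cnt (hij : i ≠ j) (hqs : ∑ l, q l = 1) (x : ℝ) :
    ∑ ω : Fin h → Fin k, (∏ t, q (ω t)) * x ^ (cnt ω i + cnt ω j)
      = (1 + (x - 1) * (q i + q j)) ^ h := by
  set F : Fin k → ℝ := fun l => if l = i ∨ l = j then x * q l else q l with hFdef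
  have hF : ∀ l ∈ ({i, j} : Finset (Fin k))ᶜ, F l = q l := fun l hl =>
    if_neg (by simpa [not_or] using hl)
  have hprod : ∀ ω : Fin h → Fin k,
      (∏ t, q (ω t)) * x ^ (cnt ω i + cnt ω j) = ∏ t, F (ω t) := by
    intro ω
    have hR : ∏ l ∈ {i, j}ᶜ, F l ^ cnt ω l = ∏ l ∈ {i, j}ᶜ, q l ^ cnt ω l :=
      prod_congr rfl fun l hl => by rw [hF l hl]
    rw [prod_eq_pow_mul_pow_mul hij, prod_eq_pow_mul_pow_mul hij F, hR]
    simp only [hFdef, true_or, or_true, if_true]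
    ring
  have hsplit := sum_compl_add_sum {i, j} q
  rw [hqs, sum_pair hij] at hsplit
  rw [sum_congr rfl fun ω _ => hprod ω, sum_prod_eq_pow, ← sum_compl_add_sum {i, j},
    sum_congr rfl hF, sum_pair hij]
  simp only [hFdef, true_or, or_true, if_true]
  congr 1
  linarith

lemma multiPr_cnt_add_cnt_lt_le (hij : i ≠ j) (hq : ∀ l, 0 ≤ q l) (hqs : ∑ l, q l = 1)
    {s : ℝ} (hs : 0 ≤ s) (θ : ℝ) :
    multiPr k h q {ω | (cnt ω i + cnt ω j : ℝ) < θ * (h * (q i + q j))}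
      ≤ Real.exp ((s * θ + Real.exp (-s) - 1) * (h * (q i + q j))) := by
  set P := q i + q j
  have hP0 : 0 ≤ P := add_nonneg (hq i) (hq j)
  have hP1 : P ≤ 1 := by
    change q i + q j ≤ 1
    rw [← hqs, ← sum_pair hij]
    exact sum_le_sum_of_subset_of_nonneg (subset_univ _) fun l _ _ => hq l
  calc multiPr k h q {ω | (cnt ω i + cnt ω j : ℝ) < θ * (h * P)}
      ≤ ∑ ω : Fin h → Fin k,
          (∏ t, q (ω t)) * Real.exp (s * (θ * (h * P) - (cnt ω i + cnt ω j))) := by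
        refine sum_le_sum fun ω _ => ?_
        have h0 : 0 ≤ ∏ t, q (ω t) := prod_nonneg fun t _ => hq _
        rw [Set.indicator_apply]
        split_ifs with hω
        · exact le_mul_of_one_le_right h0
            (Real.one_le_exp (mul_nonneg hs (sub_nonneg.mpr (le_of_lt hω))))
        · positivity
    _ = Real.exp (s * θ * (h * P))
          * ∑ ω : Fin h → Fin k, (∏ t, q (ω t)) * Real.exp (-s) ^ (cnt ω i + cnt ω j) := by
        rw [mul_sum]
        refine sum_congr rfl fun ω _ => ?_
        rw [← Real.exp_nat_mul, mul_left_comm (Real.exp _), ← Real.exp_add]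
        push_cast
        ring_nf
    _ = Real.exp (s * θ * (h * P)) * (1 + (Real.exp (-s) - 1) * P) ^ h := by
        rw [sum_prod_mul_pow_cnt_add_cnt hij hqs]
    _ ≤ Real.exp (s * θ * (h * P)) * Real.exp ((Real.exp (-s) - 1) * P) ^ h := by
        gcongr
        · nlinarith [Real.exp_pos (-s)]
        · linarith [Real.add_one_le_exp ((Real.exp (-s) - 1) * P)]
    _ = Real.exp ((s * θ + Real.exp (-s) - 1) * (h * P)) := by
        rw [← Real.exp_nat_mul, ← Real.exp_add]
        ring_nf

end Chernoff

section Binomial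

variable {α β : ℝ}

lemma pow_mul_pow_le_sqrt_pow (hβ : 0 ≤ β) (hβα : β ≤ α) {m v : ℕ} (hv : 2 * v ≤ m) :
    β ^ (m - v) * α ^ v ≤ √(α * β) ^ m := by
  have hαβ : 0 ≤ α * β := mul_nonneg (hβ.trans hβα) hβ
  have hβγ : β ≤ √(α * β) := (Real.le_sqrt hβ hαβ).mpr (by nlinarith)
  obtain ⟨e, rfl⟩ : ∃ e, m = 2 * v + e := ⟨m - 2 * v, by omega⟩
  calc β ^ (2 * v + e - v) * α ^ v = (α * β) ^ v * β ^ e := by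
        rw [show 2 * v + e - v = v + e by omega]; ring
    _ ≤ (α * β) ^ v * √(α * β) ^ e := by gcongr
    _ = √(α * β) ^ (2 * v + e) := by rw [pow_add, pow_mul, Real.sq_sqrt hαβ]

lemma sum_choose_mul_le_two_mul_sqrt_pow (hβ : 0 ≤ β) (hβα : β ≤ α) (m : ℕ) :
    ∑ v ∈ range (m + 1) with 2 * v ≤ m, (m.choose v : ℝ) * (β ^ (m - v) * α ^ v)
      ≤ (2 * √(α * β)) ^ m := by
  calc ∑ v ∈ range (m + 1) with 2 * v ≤ m, (m.choose v : ℝ) * (β ^ (m - v) * α ^ v)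
      ≤ ∑ v ∈ range (m + 1) with 2 * v ≤ m, (m.choose v : ℝ) * √(α * β) ^ m :=
        sum_le_sum fun v hv => by
          gcongr
          exact pow_mul_pow_le_sqrt_pow hβ hβα (mem_filter.mp hv).2
    _ ≤ ∑ v ∈ range (m + 1), (m.choose v : ℝ) * √(α * β) ^ m :=
        sum_le_sum_of_subset_of_nonneg (filter_subset _ _) fun _ _ _ => by positivity
    _ = (2 * √(α * β)) ^ m := by
        rw [← sum_mul, ← Nat.cast_sum, Nat.sum_range_choose, mul_pow]
        push_cast
        ring

lemma add_pow_le_two_mul_sum_choose (hβ : 0 ≤ β) (hβα : β ≤ α) (m : ℕ) :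
    (α + β) ^ m
      ≤ 2 * ∑ v ∈ range (m + 1) with 2 * v ≤ m, (m.choose v : ℝ) * (α ^ (m - v) * β ^ v) := by
  set g : ℕ → ℝ := fun v => (m.choose v : ℝ) * (α ^ (m - v) * β ^ v) with hg
  have hα : 0 ≤ α := hβ.trans hβα
  have hupper : ∑ v ∈ range (m + 1) with ¬2 * v ≤ m, g v
      ≤ ∑ v ∈ range (m + 1) with 2 * v ≤ m, g v := by
    -- the reflection `v ↦ m - v` maps the upper half into the lower half and does not decrease `g`
    calc ∑ v ∈ range (m + 1) with ¬2 * v ≤ m, g v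
        ≤ ∑ v ∈ range (m + 1) with ¬2 * v ≤ m, g (m - v) := by
          refine sum_le_sum fun v hv => ?_
          obtain ⟨hv, hvm⟩ := mem_filter.mp hv
          rw [mem_range] at hv
          simp only [hg, Nat.choose_symm (Nat.le_of_lt_succ hv), Nat.sub_sub_self
            (Nat.le_of_lt_succ hv)]
          exact mul_le_mul_of_nonneg_left (pow_mul_pow_le_pow_mul_pow hβ hβα
            (a := m - v) (b := v) (a' := v) (b' := m - v) (by omega) (by omega)) (by positivity)
      _ = ∑ v ∈ {v ∈ range (m + 1) | ¬2 * v ≤ m}.image (m - ·), g v :=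
          (sum_image fun x hx y hy hxy => by
            simp only [coe_filter, mem_range, Set.mem_ofPred_eq] at hx hy
            omega).symm
      _ ≤ ∑ v ∈ range (m + 1) with 2 * v ≤ m, g v := by
          refine sum_le_sum_of_subset_of_nonneg (fun v hv => ?_) fun _ _ _ => by positivity
          simp only [mem_image, mem_filter, mem_range] at hv ⊢
          omega
  have htotal : (α + β) ^ m = ∑ v ∈ range (m + 1), g v := by
    rw [add_comm, add_pow]
    exact sum_congr rfl fun v _ => by rw [hg]; ring
  rw [htotal, ← sum_filter_add_sum_filter_not (range (m + 1)) (fun v => 2 * v ≤ m) g]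
  linarith

end Binomial

section Tilt

variable {α β : ℝ}

lemma sum_mul_mul_sum_le_sum_mul_sum_mul {ι : Type*} (s : Finset ι) (w f g : ι → ℝ)
    (h : ∀ x ∈ s, ∀ y ∈ s, (w x - w y) * (f x * g y - f y * g x) ≤ 0) :
    (∑ x ∈ s, w x * f x) * ∑ x ∈ s, g x ≤ (∑ x ∈ s, f x) * ∑ x ∈ s, w x * g x := by
  set E : ι → ι → ℝ := fun x y => w x * (f x * g y - f y * g x) with hE
  have hdiff : (∑ x ∈ s, w x * f x) * ∑ x ∈ s, g x - (∑ x ∈ s, f x) * ∑ x ∈ s, w x * g x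
      = ∑ x ∈ s, ∑ y ∈ s, E x y := by
    rw [sum_mul_sum, sum_mul_sum, sum_comm (f := fun x y => f x * (w y * g y)), ← sum_sub_distrib]
    exact sum_congr rfl fun x _ => by rw [← sum_sub_distrib]; exact sum_congr rfl fun y _ => by ring
  have hsymm : ∑ x ∈ s, ∑ y ∈ s, E x y + ∑ x ∈ s, ∑ y ∈ s, E x y ≤ 0 := by
    nth_rewrite 2 [sum_comm]
    rw [← sum_add_distrib]
    refine sum_nonpos fun x hx => ?_
    rw [← sum_add_distrib]
    refine sum_nonpos fun y hy => ?_
    calc E x y + E y x = (w x - w y) * (f x * g y - f y * g x) := by rw [hE]; ring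
      _ ≤ 0 := h x hx y hy
  linarith

lemma sum_mul_pow_mul_sum_pow_le_of_antitone {ι : Type*} {s : Finset ι} {v : ι → ℕ} {ψ : ι → ℝ}
    {m : ℕ} (hβ : 0 ≤ β) (hβα : β ≤ α) (hvm : ∀ x ∈ s, v x ≤ m)
    (hanti : ∀ x ∈ s, ∀ y ∈ s, v x ≤ v y → ψ y ≤ ψ x) :
    (∑ x ∈ s, ψ x * (β ^ (m - v x) * α ^ v x)) * ∑ x ∈ s, α ^ (m - v x) * β ^ v x
      ≤ (∑ x ∈ s, β ^ (m - v x) * α ^ v x) * ∑ x ∈ s, ψ x * (α ^ (m - v x) * β ^ v x) := by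
  have hcross : ∀ x ∈ s, ∀ y ∈ s, v x ≤ v y →
      β ^ (m - v x) * α ^ v x * (α ^ (m - v y) * β ^ v y)
        ≤ β ^ (m - v y) * α ^ v y * (α ^ (m - v x) * β ^ v x) := by
    intro x _ y hy hxy
    have hym := hvm y hy
    calc β ^ (m - v x) * α ^ v x * (α ^ (m - v y) * β ^ v y)
        = α ^ (v x + (m - v y)) * β ^ (m - v x + v y) := by ring
      _ ≤ α ^ (v y + (m - v x)) * β ^ (m - v y + v x) :=
        pow_mul_pow_le_pow_mul_pow hβ hβα (by omega) (by omega)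
      _ = β ^ (m - v y) * α ^ v y * (α ^ (m - v x) * β ^ v x) := by ring
  refine sum_mul_mul_sum_le_sum_mul_sum_mul s ψ _ _ fun x hx y hy => ?_
  rcases le_total (v x) (v y) with hxy | hxy
  · exact mul_nonpos_of_nonneg_of_nonpos (sub_nonneg.mpr (hanti x hx y hy hxy))
      (sub_nonpos.mpr (hcross x hx y hy hxy))
  · exact mul_nonpos_of_nonpos_of_nonneg (sub_nonpos.mpr (hanti y hy x hx hxy))
      (sub_nonneg.mpr (hcross y hy x hx hxy))

lemma add_pow_mul_sum_le_of_binomial {ι : Type*} {s : Finset ι} {v : ι → ℕ} {ψ : ι → ℝ} {m : ℕ}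
    (hβ : 0 ≤ β) (hβα : β ≤ α)
    (hbin : ∀ H : ℕ → ℝ, ∑ x ∈ s, H (v x) = ∑ u ∈ range (m + 1), (m.choose u : ℝ) * H u)
    (hψ0 : ∀ x ∈ s, 0 ≤ ψ x) (hψ : ∀ x ∈ s, m < 2 * v x → ψ x = 0)
    (hanti : ∀ x ∈ s, ∀ y ∈ s, v x ≤ v y → ψ y ≤ ψ x) :
    (α + β) ^ m * ∑ x ∈ s, ψ x * (β ^ (m - v x) * α ^ v x)
      ≤ 2 * (2 * √(α * β)) ^ m * ∑ x ∈ s, ψ x * (α ^ (m - v x) * β ^ v x) := by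
  have hα : 0 ≤ α := hβ.trans hβα
  set T := s.filter fun x => 2 * v x ≤ m
  set F : ι → ℝ := fun x => β ^ (m - v x) * α ^ v x
  set G : ι → ℝ := fun x => α ^ (m - v x) * β ^ v x
  have hrestrict : ∀ Φ : ι → ℝ, ∑ x ∈ s, ψ x * Φ x = ∑ x ∈ T, ψ x * Φ x := fun Φ => by
    rw [sum_filter]
    refine sum_congr rfl fun x hx => ?_
    split_ifs with hxm
    · rfl
    · rw [hψ x hx (by omega), zero_mul]
  have hbinT : ∀ H : ℕ → ℝ,
      ∑ x ∈ T, H (v x) = ∑ u ∈ range (m + 1) with 2 * u ≤ m, (m.choose u : ℝ) * H u := by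
    intro H
    rw [sum_filter, sum_filter, hbin fun u => if 2 * u ≤ m then H u else 0]
    simp only [mul_ite, mul_zero]
  have hA : ∑ x ∈ T, F x ≤ (2 * √(α * β)) ^ m :=
    (hbinT fun u => β ^ (m - u) * α ^ u).trans_le (sum_choose_mul_le_two_mul_sqrt_pow hβ hβα m)
  have hB : (α + β) ^ m ≤ 2 * ∑ x ∈ T, G x :=
    (hbinT fun u => α ^ (m - u) * β ^ u) ▸ add_pow_le_two_mul_sum_choose hβ hβα m
  have hcheb := sum_mul_pow_mul_sum_pow_le_of_antitone (s := T) (ψ := ψ) (m := m) hβ hβα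
    (fun x hx => by have := (mem_filter.mp hx).2; omega)
    fun x hx y hy => hanti x (mem_filter.mp hx).1 y (mem_filter.mp hy).1
  have hL0 : 0 ≤ ∑ x ∈ T, ψ x * F x :=
    sum_nonneg fun x hx => mul_nonneg (hψ0 x (mem_filter.mp hx).1) (by positivity)
  have hR0 : 0 ≤ ∑ x ∈ T, ψ x * G x :=
    sum_nonneg fun x hx => mul_nonneg (hψ0 x (mem_filter.mp hx).1) (by positivity)
  rw [hrestrict F, hrestrict G]
  calc (α + β) ^ m * ∑ x ∈ T, ψ x * F x
      ≤ (2 * ∑ x ∈ T, G x) * ∑ x ∈ T, ψ x * F x := by gcongr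
    _ = 2 * ((∑ x ∈ T, ψ x * F x) * ∑ x ∈ T, G x) := by ring
    _ ≤ 2 * ((∑ x ∈ T, F x) * ∑ x ∈ T, ψ x * G x) := by gcongr
    _ ≤ 2 * ((2 * √(α * β)) ^ m * ∑ x ∈ T, ψ x * G x) := by gcongr
    _ = 2 * (2 * √(α * β)) ^ m * ∑ x ∈ T, ψ x * G x := by ring

end Tilt

section Collapse

variable {i j : Fin k}

def collapse (i j : Fin k) (ω : Fin h → Fin k) : Fin h → Fin k :=
  fun t => if ω t = j then i else ω t

lemma collapse_ne (hij : i ≠ j) (ω : Fin h → Fin k) (t : Fin h) : collapse i j ω t ≠ j := by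
  unfold collapse
  split_ifs with ht
  · exact hij
  · exact ht

lemma cnt_collapse_self (hij : i ≠ j) (ω : Fin h → Fin k) :
    cnt (collapse i j ω) i = cnt ω i + cnt ω j := by
  unfold cnt
  rw [← card_union_of_disjoint (disjoint_filter.mpr fun t _ (h1 : ω t = i) (h2 : ω t = j) =>
    hij (h1.symm.trans h2)), ← filter_or]
  congr 1
  refine filter_congr fun t _ => ?_
  by_cases ht : ω t = j <;> simp [collapse, ht]

lemma cnt_collapse_of_ne {l : Fin k} (hli : l ≠ i) (hlj : l ≠ j) (ω : Fin h → Fin k) :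
    cnt (collapse i j ω) l = cnt ω l := by
  unfold cnt
  congr 1
  refine filter_congr fun t _ => ?_
  by_cases ht : ω t = j
  · simp [collapse, ht, hli.symm, hlj.symm]
  · simp [collapse, ht]

lemma sum_filter_collapse_eq {z : Fin h → Fin k} (hz : ∀ t, z t ≠ j) (H : ℕ → ℝ) :
    ∑ ω ∈ univ.filter (collapse i j · = z), H (cnt ω j)
      = ∑ u ∈ range (cnt z i + 1), ((cnt z i).choose u : ℝ) * H u := by
  simp_rw [← nsmul_eq_mul]
  rw [cnt, ← sum_powerset_apply_card]
  refine sum_nbij' (fun ω => univ.filter (ω · = j)) (fun s t => if t ∈ s then j else z t)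
    ?_ ?_ ?_ ?_ fun ω _ => rfl
  · intro ω hω
    simp only [mem_filter, mem_univ, true_and, mem_powerset] at hω ⊢
    intro t ht
    simp only [mem_filter, mem_univ, true_and] at ht ⊢
    rw [← hω, collapse, if_pos ht]
  · intro s hs
    simp only [mem_filter, mem_univ, true_and, mem_powerset] at hs ⊢
    funext t
    by_cases ht : t ∈ s
    · simpa [collapse, ht] using (mem_filter.mp (hs ht)).2.symm
    · simp [collapse, ht, hz t]
  · intro ω hω
    simp only [mem_filter, mem_univ, true_and] at hω
    funext t
    by_cases ht : ω t = j
    · simp [ht]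
    · simp only [mem_filter, mem_univ, true_and, ht, if_false, ← hω, collapse]
  · intro s hs
    ext t
    by_cases ht : t ∈ s <;> simp [ht, hz t]

end Collapse

section Fiber

variable {p : Fin k → ℝ} {i j : Fin k}

lemma winShare_le_winShare_of_le (hij : i ≠ j) {c c' : Fin k → ℕ}
    (hsum : c i + c j = c' i + c' j) (hrest : ∀ l, l ≠ i → l ≠ j → c l = c' l)
    (hle : c j ≤ c' j) : winShare c' i ≤ winShare c i := by
  rcases hle.eq_or_lt with heq | hlt
  · have hcc : c = c' := funext fun l => by
      by_cases hli : l = i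
      · subst hli; omega
      by_cases hlj : l = j
      · subst hlj; exact heq
      exact hrest l hli hlj
    rw [hcc]
  by_cases hmax : ∀ l, c' l ≤ c' i
  · -- `i` is among the maxima of `c'`, so moving samples from `j` to `i` makes it the unique one
    rw [winShare_eq_one_of_forall_lt (c := c) fun l hl => ?_]
    · exact winShare_le_one
    by_cases hlj : l = j
    · have := hmax j; subst hlj; omega
    · have := hmax l; rw [hrest l hl hlj]; omega
  · obtain ⟨l, hl⟩ := not_forall.mp hmax
    rw [winShare_eq_zero_of_lt (not_le.mp hl)]
    exact winShare_nonneg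

lemma sum_fiber_swap_le (hij : i ≠ j) (hp : ∀ l, 0 ≤ p l) (hji : p j ≤ p i)
    (hP : 0 < p i + p j) {z : Fin h → Fin k} (hz : ∀ t, z t ≠ j) {ρ : ℝ}
    (hρ : 2 * (2 * √(p i * p j)) ^ cnt z i ≤ ρ * (p i + p j) ^ cnt z i) :
    ∑ ω ∈ univ.filter (collapse i j · = z),
        (∏ t, p (Equiv.swap i j (ω t))) * winShare (cnt ω) i
      ≤ ρ * ∑ ω ∈ univ.filter (collapse i j · = z), (∏ t, p (ω t)) * winShare (cnt ω) i := by
  set m := cnt z i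
  set W := ∏ l ∈ ({i, j} : Finset (Fin k))ᶜ, p l ^ cnt z l
  set s := univ.filter (collapse i j · = z)
  have hsum : ∀ ω ∈ s, cnt ω i + cnt ω j = m := fun ω hω => by
    change _ = cnt z i
    rw [← (mem_filter.mp hω).2, cnt_collapse_self hij]
  have hrest : ∀ ω ∈ s, ∀ l, l ≠ i → l ≠ j → cnt ω l = cnt z l := fun ω hω l hli hlj => by
    rw [← (mem_filter.mp hω).2, cnt_collapse_of_ne hli hlj]
  have hW : ∀ ω ∈ s, ∏ l ∈ ({i, j} : Finset (Fin k))ᶜ, p l ^ cnt ω l = W :=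
    fun ω hω => prod_congr rfl fun l hl => by
      simp only [mem_compl, mem_insert, mem_singleton, not_or] at hl
      rw [hrest ω hω l hl.1 hl.2]
  have hwt : ∀ ω ∈ s, (∏ t, p (ω t)) * winShare (cnt ω) i
      = W * (winShare (cnt ω) i * (p i ^ (m - cnt ω j) * p j ^ cnt ω j)) := fun ω hω => by
    rw [prod_eq_pow_mul_pow_mul hij, hW ω hω, ← hsum ω hω, Nat.add_sub_cancel]
    ring
  have hwtσ : ∀ ω ∈ s, (∏ t, p (Equiv.swap i j (ω t))) * winShare (cnt ω) i
      = W * (winShare (cnt ω) i * (p j ^ (m - cnt ω j) * p i ^ cnt ω j)) := fun ω hω => by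
    rw [prod_swap_eq hij, hW ω hω, ← hsum ω hω, Nat.add_sub_cancel]
    ring
  have hslice := add_pow_mul_sum_le_of_binomial (s := s) (v := (cnt · j))
    (ψ := fun ω => winShare (cnt ω) i)
    (hp j) hji (sum_filter_collapse_eq hz) (fun _ _ => winShare_nonneg)
    (fun ω hω hm => winShare_eq_zero_of_lt (l := j) (by have := hsum ω hω; omega))
    (fun x hx y hy hxy => winShare_le_winShare_of_le hij (by rw [hsum x hx, hsum y hy])
      (fun l hli hlj => by rw [hrest x hx l hli hlj, hrest y hy l hli hlj]) hxy)
  rw [sum_congr rfl hwt, sum_congr rfl hwtσ, ← mul_sum, ← mul_sum, mul_left_comm]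
  set L := ∑ ω ∈ s, winShare (cnt ω) i * (p j ^ (m - cnt ω j) * p i ^ cnt ω j)
  set R := ∑ ω ∈ s, winShare (cnt ω) i * (p i ^ (m - cnt ω j) * p j ^ cnt ω j)
  have hR : 0 ≤ R := sum_nonneg fun ω _ =>
    mul_nonneg winShare_nonneg (mul_nonneg (pow_nonneg (hp i) _) (pow_nonneg (hp j) _))
  have hLR : L ≤ ρ * R := by
    refine le_of_mul_le_mul_left ?_ (pow_pos hP m)
    calc (p i + p j) ^ m * L ≤ 2 * (2 * √(p i * p j)) ^ m * R := hslice
      _ ≤ ρ * (p i + p j) ^ m * R := by gcongr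
      _ = (p i + p j) ^ m * (ρ * R) := by ring
  exact mul_le_mul_of_nonneg_left hLR (prod_nonneg fun l _ => pow_nonneg (hp l) _)

lemma winPrOn_comp_swap_le (hij : i ≠ j) (hp : ∀ l, 0 ≤ p l) (hji : p j ≤ p i)
    (hP : 0 < p i + p j) (S : Set ℕ) {ρ : ℝ}
    (hρ : ∀ m ∈ S, 2 * (2 * √(p i * p j)) ^ m ≤ ρ * (p i + p j) ^ m) :
    winPrOn k h (p ∘ Equiv.swap i j) {ω | cnt ω i + cnt ω j ∈ S} i
      ≤ ρ * winPrOn k h p {ω | cnt ω i + cnt ω j ∈ S} i := by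
  rw [winPrOn_eq, winPrOn_eq]
  conv_lhs => rw [← sum_fiberwise univ (collapse i j)]
  conv_rhs => rw [← sum_fiberwise univ (collapse i j), mul_sum]
  refine sum_le_sum fun z _ => ?_
  by_cases hzS : (∀ t, z t ≠ j) ∧ cnt z i ∈ S
  · have hE : ∀ ω ∈ univ.filter (collapse i j · = z), ω ∈ {ω | cnt ω i + cnt ω j ∈ S} :=
      fun ω hω => by
        change _ ∈ S
        rw [← cnt_collapse_self hij, (mem_filter.mp hω).2]
        exact hzS.2
    rw [sum_congr rfl fun ω hω => Set.indicator_of_mem (hE ω hω) _,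
      sum_congr rfl fun ω hω => Set.indicator_of_mem (hE ω hω) _]
    exact sum_fiber_swap_le hij hp hji hP hzS.1 (hρ _ hzS.2)
  · have hE : ∀ ω ∈ univ.filter (collapse i j · = z), ω ∉ {ω | cnt ω i + cnt ω j ∈ S} :=
      fun ω hω hωS => by
        have hωz := (mem_filter.mp hω).2
        refine hzS ⟨fun t => hωz ▸ collapse_ne hij ω t, ?_⟩
        rw [← hωz, cnt_collapse_self hij]
        exact hωS
    rw [sum_congr rfl fun ω hω => Set.indicator_of_notMem (hE ω hω) _,
      sum_congr rfl fun ω hω => Set.indicator_of_notMem (hE ω hω) _]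
    simp

end Fiber

section Gap

variable {α β : ℝ}

lemma exp_neg_one_fifth_le : Real.exp (-(1 / 5)) ≤ 50 / 61 := by
  rw [Real.exp_neg, inv_le_comm₀ (Real.exp_pos _) (by norm_num)]
  have := Real.quadratic_le_exp_of_nonneg (x := 1 / 5) (by norm_num)
  norm_num at this ⊢
  linarith

lemma two_mul_sqrt_mul_le (hαβ : 0 < α + β) :
    2 * √(α * β) ≤ (α + β) * Real.exp (-((α - β) ^ 2 / (2 * (α + β) ^ 2))) := by
  set d := (α - β) ^ 2 / (α + β) ^ 2
  have hd : 4 * (α * β) = (α + β) ^ 2 * (1 - d) := by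
    simp only [d]; field_simp; ring
  have hexp : Real.exp (-(d / 2)) ^ 2 = Real.exp (-d) := by
    rw [← Real.exp_nat_mul]; ring_nf
  have hrhs : 0 ≤ (α + β) * Real.exp (-(d / 2)) := by positivity
  rw [show (α - β) ^ 2 / (2 * (α + β) ^ 2) = d / 2 by simp only [d]; field_simp]
  have hsq : 2 ^ 2 * (α * β) ≤ ((α + β) * Real.exp (-(d / 2))) ^ 2 := by
    calc 2 ^ 2 * (α * β) = (α + β) ^ 2 * (1 - d) := by rw [← hd]; norm_num
      _ ≤ (α + β) ^ 2 * Real.exp (-d) := by gcongr; linarith [Real.add_one_le_exp (-d)]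
      _ = ((α + β) * Real.exp (-(d / 2))) ^ 2 := by rw [mul_pow, hexp]
  calc 2 * √(α * β) = √(2 ^ 2 * (α * β)) := by
        rw [Real.sqrt_mul (sq_nonneg (2 : ℝ)) (α * β), Real.sqrt_sq zero_le_two]
    _ ≤ √(((α + β) * Real.exp (-(d / 2))) ^ 2) := Real.sqrt_le_sqrt hsq
    _ = (α + β) * Real.exp (-(d / 2)) := Real.sqrt_sq hrhs

lemma two_mul_sqrt_mul_pow_le (hP : 0 < α + β) (hgap : 2 * (α + β) ≤ h * (α - β) ^ 2)
    {θ : ℝ} (hθ : 0 ≤ θ) {m : ℕ} (hm : θ * (h * (α + β)) ≤ m) :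
    (2 * √(α * β)) ^ m ≤ Real.exp (-θ) * (α + β) ^ m := by
  set d := (α - β) ^ 2 / (2 * (α + β) ^ 2)
  have hd : θ ≤ m * d := by
    calc θ ≤ θ * (h * (α + β)) * d := by
          rw [show θ * (h * (α + β)) * d = θ * (h * (α - β) ^ 2 / (2 * (α + β))) by
            simp only [d]; field_simp]
          refine le_mul_of_one_le_right hθ ?_
          rw [le_div_iff₀ (by positivity)]
          linarith
      _ ≤ m * d := by gcongr
  calc (2 * √(α * β)) ^ m ≤ ((α + β) * Real.exp (-d)) ^ m :=
        pow_le_pow_left₀ (by positivity) (two_mul_sqrt_mul_le hP) m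
    _ = Real.exp (-(m * d)) * (α + β) ^ m := by
        rw [mul_pow, ← Real.exp_nat_mul]
        ring_nf
    _ ≤ Real.exp (-θ) * (α + β) ^ m := by gcongr

lemma multiPr_cnt_add_cnt_lt_le_exp {q : Fin k → ℝ} {i j : Fin k} (hij : i ≠ j)
    (hq : ∀ l, 0 ≤ q l) (hqs : ∑ l, q l = 1) :
    multiPr k h q {ω | (cnt ω i + cnt ω j : ℝ) < 4 / 5 * (h * (q i + q j))}
      ≤ Real.exp (-(h * (q i + q j) / 50)) := by
  refine (multiPr_cnt_add_cnt_lt_le hij hq hqs (s := 1 / 5) (by norm_num) (4 / 5)).trans ?_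
  have := exp_neg_one_fifth_le
  have : 0 ≤ h * (q i + q j) := mul_nonneg (Nat.cast_nonneg _) (add_nonneg (hq i) (hq j))
  gcongr
  nlinarith

lemma winPr_le_of_sq_gap {p : Fin k → ℝ} {i j : Fin k} (hij : i ≠ j)
    (hp : ∀ l, 0 ≤ p l) (hps : ∑ l, p l = 1) (hji : p j ≤ p i) (hi : 0 < p i)
    (hgap : 2 * (p i + p j) ≤ h * (p i - p j) ^ 2) :
    winPr k h p j
      ≤ 2 * Real.exp (-(4 / 5)) * winPr k h p i + Real.exp (-(h * (p i + p j) / 50)) := by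
  have hP : 0 < p i + p j := by linarith [hp j]
  set S : Set ℕ := {m | 4 / 5 * (h * (p i + p j)) ≤ m}
  set σ := Equiv.swap i j
  have hgood : winPrOn k h (p ∘ σ) {ω | cnt ω i + cnt ω j ∈ S} i
      ≤ 2 * Real.exp (-(4 / 5)) * winPr k h p i := by
    refine (winPrOn_comp_swap_le hij hp hji hP S fun m hm => ?_).trans
      (mul_le_mul_of_nonneg_left (winPrOn_le_winPr hp _) (by positivity))
    rw [mul_assoc]
    exact mul_le_mul_of_nonneg_left (two_mul_sqrt_mul_pow_le hP hgap (by norm_num) hm) zero_le_two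
  have hbad : winPrOn k h (p ∘ σ) {ω | cnt ω i + cnt ω j ∈ S}ᶜ i
      ≤ Real.exp (-(h * (p i + p j) / 50)) := by
    have hq := multiPr_cnt_add_cnt_lt_le_exp (h := h) (q := p ∘ σ) hij (fun l => hp (σ l))
      ((Equiv.sum_comp σ p).trans hps)
    have hqij : (p ∘ σ) i + (p ∘ σ) j = p i + p j := by simp [σ, add_comm]
    have hset : {ω | cnt ω i + cnt ω j ∈ S}ᶜ
        = {ω : Fin h → Fin k | (cnt ω i + cnt ω j : ℝ) < 4 / 5 * (h * (p i + p j))} := by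
      ext ω
      simp [S]
    rw [hqij] at hq
    rw [hset]
    exact (winPrOn_le_multiPr (fun l => hp _) _).trans hq
  have hswap : winPr k h p j = winPr k h (p ∘ σ) i := by
    rw [winPr_comp_perm, Equiv.swap_apply_left]
  rw [hswap, ← winPrOn_add_winPrOn_compl {ω | cnt ω i + cnt ω j ∈ S}]
  linarith

end Gap

lemma exp_neg_div_fifty_le {n : ℕ} (hn : 50 ≤ n) {x : ℝ} (hx : 324 * Real.log n ≤ x) :
    Real.exp (-(x / 50)) ≤ 1 / (50 * n) := by
  have hn0 : (50 : ℝ) ≤ n := by exact_mod_cast hn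
  have hlog : 0 ≤ Real.log n := Real.log_nonneg (by linarith)
  calc Real.exp (-(x / 50)) ≤ Real.exp (-Real.log ((n : ℝ) ^ 2)) := by
        rw [Real.log_pow]
        gcongr
        push_cast
        linarith
    _ = 1 / (n : ℝ) ^ 2 := by rw [Real.exp_neg, Real.exp_log (by positivity), one_div]
    _ ≤ 1 / (50 * n) := by gcongr; nlinarith

lemma two_mul_add_le_mul_sq_of_sqrt_le {a b c x : ℝ} (hcb : c ≤ b) (hx : 0 < x)
    (hgap : √(2 * (a + b) / x) ≤ a - c) : 2 * (a + c) ≤ x * (a - c) ^ 2 := by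
  have hsq := (Real.sqrt_le_left ((Real.sqrt_nonneg _).trans hgap)).mp hgap
  rw [div_le_iff₀ hx] at hsq
  nlinarith

/-- there is a constant `0 < C6 < 1` such that for `n` large enough,
`k ≤ n`, `p_1 ≥ … ≥ p_k`, `h·p_1 ≥ 324·log n`, and every opinion `j ≠ 1` with
`p_1 - p_j ≥ √(2(p_1 + p_2)/h)`, one has `Pr(W_1) ≥ (1/(1 - C6))·Pr(W_j)`. -/
theorem win_ratio_large_bias_lower_bound :
    ∃ C6 : ℝ, 0 < C6 ∧ C6 < 1 ∧
      ∃ n0 : ℕ, ∀ (n k h : ℕ), n0 ≤ n → ∀ (hk : 2 ≤ k), 1 ≤ h → k ≤ n →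
        ∀ p : Fin k → ℝ, (∀ i, 0 ≤ p i) → ∑ i, p i = 1 →
          (∀ i j : Fin k, i ≤ j → p j ≤ p i) →
          324 * Real.log n ≤ (h : ℝ) * p (o₁ k hk) →
          ∀ j : Fin k, j ≠ o₁ k hk →
            Real.sqrt (2 * (p (o₁ k hk) + p (o₂ k hk)) / h) ≤ p (o₁ k hk) - p j →
            (1 / (1 - C6)) * winPr k h p j ≤ winPr k h p (o₁ k hk) := by
  refine ⟨1 / 25, by norm_num, by norm_num, 50, ?_⟩
  intro n k h hn hk hh hkn p hp hps hsort hlog j hj hgap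
  set i := o₁ k hk
  have hi_le : ∀ l, i ≤ l := fun l => Fin.le_def.mpr (Nat.zero_le _)
  have hpi : 0 < p i := pos_of_mul_pos_right
    ((mul_pos (by norm_num) (Real.log_pos (by exact_mod_cast (by omega : 1 < n)))).trans_le hlog)
    (Nat.cast_nonneg h)
  have hj2 : p j ≤ p (o₂ k hk) :=
    hsort _ _ (Fin.le_def.mpr (Nat.one_le_iff_ne_zero.mpr fun h0 => hj (Fin.ext h0)))
  have hmain := winPr_le_of_sq_gap hj.symm hp hps (hsort i j (hi_le j)) hpi
    (two_mul_add_le_mul_sq_of_sqrt_le hj2 (Nat.cast_pos.mpr hh) hgap)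
  have hbad := exp_neg_div_fifty_le hn (x := h * (p i + p j)) (by nlinarith [hp j])
  have hwin := one_le_card_mul_winPr (h := h) (by omega) hp hps fun l => hsort i l (hi_le l)
  have hexp : Real.exp (-(4 / 5)) ≤ (50 / 61) ^ 4 := by
    rw [show -(4 / 5 : ℝ) = (4 : ℕ) * (-(1 / 5)) by norm_num, Real.exp_nat_mul]
    exact pow_le_pow_left₀ (Real.exp_pos _).le exp_neg_one_fifth_le 4
  have hkn' : (k : ℝ) ≤ n := by exact_mod_cast hkn
  have hW : 0 ≤ winPr k h p i := by nlinarith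
  have h1n : 1 / (50 * (n : ℝ)) ≤ winPr k h p i / 50 := by
    rw [div_le_div_iff₀ (by positivity) (by norm_num)]
    nlinarith
  have hji : winPr k h p j ≤ 24 / 25 * winPr k h p i := by nlinarith
  rw [show (1 : ℝ) / (1 - 1 / 25) = 25 / 24 by norm_num]
  linarith
end
end

section
/- Let k ≥ 2 and let p, p' : {1,…,k} → ℝ be probability vectors (all entries nonnegative, each summing to 1) with 0 < p_1 < 1 and p'_1 > 0. Suppose {1,…,k} is partitioned as {1} ∪ I ∪ J ∪ K (disjoint sets not containing 1) such that: for every j ∈ I, p'_1 − p'_j > p_1 − p_j; for every j ∈ J, p'_j / p'_1 < p_j / p_1; and for every j ∈ K, p'_j = 0. Then p'_1 > p_1. -/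
/-!
Suppose `p'₁ ≤ p₁`. Then every opinion `j ≠ 1` strictly loses mass or vanishes: on `I` by the
bias condition, on `J` because `p'_j < p_j · p'₁ / p₁ ≤ p_j`, and on `K` by assumption. As
`p₁ < 1`, some `j ≠ 1` has `p_j > 0` and so strictly loses mass; hence `∑ p' < ∑ p`,
contradicting that both sum to `1`.
-/

open scoped BigOperators

noncomputable section

open Finset

theorem lt_of_div_lt_div_of_le {a a' b b' : ℝ} (ha' : 0 < a') (hb : 0 ≤ b) (ha : a' ≤ a)
    (h : b' / a' < b / a) : b' < b :=
  (div_lt_div_iff_of_pos_right ha').mp (h.trans_le (div_le_div_of_nonneg_left hb ha' ha))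

theorem lt_of_sum_eq_of_forall_ne_lt_or_eq_zero {ι M : Type*} [Fintype ι] [DecidableEq ι]
    [AddCommGroup M] [LinearOrder M] [IsOrderedAddMonoid M] {p p' : ι → M} {o : ι}
    (hp : ∀ i, 0 ≤ p i) (hsum : ∑ i, p i = ∑ i, p' i) (ho : p o < ∑ i, p i)
    (hother : ∀ j ≠ o, p' j < p j ∨ p' j = 0) : p o < p' o := by
  have hsplit (f : ι → M) : ∑ i, f i = f o + ∑ i ∈ univ.erase o, f i :=
    (add_sum_erase _ f (mem_univ o)).symm
  obtain ⟨j, hj, hpj⟩ : ∃ j ∈ univ.erase o, (0 : ι → M) j < p j := by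
    apply exists_lt_of_sum_lt
    rw [hsplit] at ho
    simpa using ho
  have hne : ∀ i ∈ univ.erase o, i ≠ o := fun i hi => ne_of_mem_erase hi
  have hlt : ∑ i ∈ univ.erase o, p' i < ∑ i ∈ univ.erase o, p i := by
    refine sum_lt_sum (fun i hi => ?_) ⟨j, hj, ?_⟩
    · rcases hother i (hne i hi) with h | h
      · exact h.le
      · exact h ▸ hp i
    · rcases hother j (hne j hj) with h | h
      · exact h
      · exact h ▸ hpj
  rw [hsplit p, hsplit p'] at hsum
  by_contra! h
  exact (add_lt_add_of_le_of_lt h hlt).ne' hsum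

theorem plurality_mass_increases_general
    (k : ℕ) (hk : 2 ≤ k) (p p' : Fin k → ℝ)
    (hp0 : ∀ i, 0 ≤ p i) (hps : ∑ i, p i = 1)
    (hp's : ∑ i, p' i = 1)
    (hp1lt : p (o₁ k hk) < 1)
    (hp'1pos : 0 < p' (o₁ k hk))
    (I J K : Finset (Fin k))
    (hcover : insert (o₁ k hk) (I ∪ J ∪ K) = Finset.univ)
    (hI : ∀ j ∈ I, p (o₁ k hk) - p j < p' (o₁ k hk) - p' j)
    (hJ : ∀ j ∈ J, p' j / p' (o₁ k hk) < p j / p (o₁ k hk))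
    (hK : ∀ j ∈ K, p' j = 0) :
    p (o₁ k hk) < p' (o₁ k hk) := by
  set o := o₁ k hk
  by_contra! h
  refine h.not_gt (lt_of_sum_eq_of_forall_ne_lt_or_eq_zero hp0 (hps.trans hp's.symm)
    (hps ▸ hp1lt) fun j hj => ?_)
  have hj' : j ∈ I ∪ J ∪ K := (mem_insert.mp (hcover ▸ mem_univ j)).resolve_left hj
  simp only [mem_union] at hj'
  rcases hj' with (hjI | hjJ) | hjK
  · exact Or.inl (by linarith [hI j hjI])
  · exact Or.inl (lt_of_div_lt_div_of_le hp'1pos (hp0 j) h (hJ j hjJ))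
  · exact Or.inr (hK j hjK)

/-- if the opinion set `{1,…,k}` is partitioned as `{1} ∪ I ∪ J ∪ K`
where for `j ∈ I` the bias towards opinion 1 increases (`p'_1 - p'_j > p_1 - p_j`),
for `j ∈ J` the ratio decreases (`p'_j/p'_1 < p_j/p_1`), and for `j ∈ K` the
opinion disappears (`p'_j = 0`), then `p'_1 > p_1`. -/
theorem plurality_mass_increases
    (k : ℕ) (hk : 2 ≤ k) (p p' : Fin k → ℝ)
    (hp0 : ∀ i, 0 ≤ p i) (hps : ∑ i, p i = 1)
    (hp'0 : ∀ i, 0 ≤ p' i) (hp's : ∑ i, p' i = 1)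
    (hp1pos : 0 < p (o₁ k hk)) (hp1lt : p (o₁ k hk) < 1)
    (hp'1pos : 0 < p' (o₁ k hk))
    (I J K : Finset (Fin k))
    (hIJ : Disjoint I J) (hIK : Disjoint I K) (hJK : Disjoint J K)
    (h1 : o₁ k hk ∉ I ∪ J ∪ K)
    (hcover : insert (o₁ k hk) (I ∪ J ∪ K) = Finset.univ)
    (hI : ∀ j ∈ I, p (o₁ k hk) - p j < p' (o₁ k hk) - p' j)
    (hJ : ∀ j ∈ J, p' j / p' (o₁ k hk) < p j / p (o₁ k hk))
    (hK : ∀ j ∈ K, p' j = 0) :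
    p (o₁ k hk) < p' (o₁ k hk) :=
  plurality_mass_increases_general k hk p p' hp0 hps hp's hp1lt hp'1pos I J K hcover hI hJ hK
end
end
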